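/- The Jordanian quantum co-plane, the algebra generated by x₁, x₂ with relations x₂² = 0, x₁² = -x₂x₁, x₁x₂ = -x₂x₁, is 4-dimensional with basis {1, x₂, x₁, x₂x₁}. -/

import Mathlib

/-- The defining relations of the Jordanian quantum co-plane:
`x₂² = 0`, `x₁² = -x₂x₁`, `x₁x₂ = -x₂x₁`. -/
inductive CoplaneRel : FreeAlgebra ℂ (Fin 2) → FreeAlgebra ℂ (Fin 2) → Prop
  | sq2 : CoplaneRel (FreeAlgebra.ι ℂ 1 * FreeAlgebra.ι ℂ 1) 0
  | sq1 : CoplaneRel (FreeAlgebra.ι ℂ 0 * FreeAlgebra.ι ℂ 0)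
      (-(FreeAlgebra.ι ℂ 1 * FreeAlgebra.ι ℂ 0))
  | anti : CoplaneRel (FreeAlgebra.ι ℂ 0 * FreeAlgebra.ι ℂ 1)
      (-(FreeAlgebra.ι ℂ 1 * FreeAlgebra.ι ℂ 0))

/-- The Jordanian quantum co-plane algebra. -/
abbrev JCoplane := RingQuot CoplaneRel

noncomputable def cx1 : JCoplane := RingQuot.mkAlgHom ℂ CoplaneRel (FreeAlgebra.ι ℂ 0)
noncomputable def cx2 : JCoplane := RingQuot.mkAlgHom ℂ CoplaneRel (FreeAlgebra.ι ℂ 1)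

noncomputable section JCoplaneAux

/- Helper lemmas restated with `RingQuot`'s primitive instances, so that `rw` works. -/
lemma JC.mulneg (x y : JCoplane) : x * -y = -(x * y) := mul_neg x y
lemma JC.negmul (x y : JCoplane) : -x * y = -(x * y) := neg_mul x y
lemma JC.negzero : -(0 : JCoplane) = 0 := neg_zero

lemma JC.r2 : cx2 * cx2 = 0 := by
  have := RingQuot.mkAlgHom_rel ℂ CoplaneRel.sq2
  simpa [cx2, map_mul] using this

lemma JC.r1 : cx1 * cx1 = -(cx2 * cx1) := by
  have := RingQuot.mkAlgHom_rel ℂ CoplaneRel.sq1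
  simpa [cx1, cx2, map_mul] using this

lemma JC.ra : cx1 * cx2 = -(cx2 * cx1) := by
  have := RingQuot.mkAlgHom_rel ℂ CoplaneRel.anti
  simpa [cx1, cx2, map_mul] using this

lemma JC.d1 : cx2 * (cx2 * cx1) = 0 := by rw [← mul_assoc, JC.r2, zero_mul]
lemma JC.d4 : (cx2 * cx1) * cx1 = 0 := by
  rw [mul_assoc, JC.r1, JC.mulneg, JC.d1, JC.negzero]
lemma JC.d2 : cx1 * (cx2 * cx1) = 0 := by
  rw [← mul_assoc, JC.ra, JC.negmul, JC.d4, JC.negzero]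
lemma JC.d3 : (cx2 * cx1) * cx2 = 0 := by
  rw [mul_assoc, JC.ra, JC.mulneg, JC.d1, JC.negzero]
lemma JC.d5 : (cx2 * cx1) * (cx2 * cx1) = 0 := by
  rw [← mul_assoc, JC.d3, zero_mul]

/-- The candidate basis. -/
def JC.v : Fin 4 → JCoplane := ![1, cx2, cx1, cx2 * cx1]

/-- The span of the candidate basis. -/
def JC.S : Submodule ℂ JCoplane := Submodule.span ℂ (Set.range JC.v)

lemma JC.mem_S (i : Fin 4) : JC.v i ∈ JC.S := Submodule.subset_span ⟨i, rfl⟩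

lemma JC.mul_mem_S {x y : JCoplane} (hx : x ∈ JC.S) (hy : y ∈ JC.S) :
    x * y ∈ JC.S := by
  have h : JC.S * JC.S ≤ JC.S := by
    rw [JC.S, Submodule.span_mul_span, Submodule.span_le]
    rintro _ ⟨_, ⟨i, rfl⟩, _, ⟨j, rfl⟩, rfl⟩
    fin_cases i <;> fin_cases j <;>
      simp [JC.v, one_mul, mul_one, JC.r1, JC.r2, JC.ra,
        JC.d1, JC.d2, JC.d3, JC.d4, JC.d5] <;>
      first
        | exact zero_mem _
        | exact Submodule.subset_span (by simp)
        | exact neg_mem (Submodule.subset_span (by simp))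
  exact h (Submodule.mul_mem_mul hx hy)

lemma JC.S_top : JC.S = ⊤ := by
  rw [eq_top_iff]
  rintro x -
  obtain ⟨a, rfl⟩ := RingQuot.mkAlgHom_surjective ℂ CoplaneRel x
  induction a using FreeAlgebra.induction with
  | grade0 r =>
      rw [AlgHom.commutes, Algebra.algebraMap_eq_smul_one]
      exact JC.S.smul_mem r (JC.mem_S 0)
  | grade1 i =>
      fin_cases i
      · exact JC.mem_S 2
      · exact JC.mem_S 1
  | mul a b ha hb => rw [map_mul]; exact JC.mul_mem_S ha hb
  | add a b ha hb => rw [map_add]; exact add_mem ha hb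

/- A 4-dimensional matrix representation (the left regular representation). -/

def JC.X1 : Matrix (Fin 4) (Fin 4) ℂ := !![0,0,0,0; 0,0,0,0; 1,0,0,0; 0,-1,-1,0]
def JC.X2 : Matrix (Fin 4) (Fin 4) ℂ := !![0,0,0,0; 1,0,0,0; 0,0,0,0; 0,0,1,0]

lemma JC.hX2 : JC.X2 * JC.X2 = 0 := by
  ext i j; fin_cases i <;> fin_cases j <;>
    simp [JC.X2, Matrix.mul_apply, Fin.sum_univ_four, Matrix.vecHead, Matrix.vecTail]

lemma JC.hX1 : JC.X1 * JC.X1 = -(JC.X2 * JC.X1) := by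
  ext i j; fin_cases i <;> fin_cases j <;>
    simp [JC.X1, JC.X2, Matrix.mul_apply, Fin.sum_univ_four, Matrix.vecHead, Matrix.vecTail]

lemma JC.hanti : JC.X1 * JC.X2 = -(JC.X2 * JC.X1) := by
  ext i j; fin_cases i <;> fin_cases j <;>
    simp [JC.X1, JC.X2, Matrix.mul_apply, Fin.sum_univ_four, Matrix.vecHead, Matrix.vecTail]

/-- The representation of the co-plane on `ℂ⁴`. -/
def JC.φ : JCoplane →ₐ[ℂ] Matrix (Fin 4) (Fin 4) ℂ :=
  RingQuot.liftAlgHom ℂ ⟨FreeAlgebra.lift ℂ ![JC.X1, JC.X2], by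
    rintro x y (h|h|h) <;>
      simp only [map_mul, map_zero, map_neg, FreeAlgebra.lift_ι_apply,
        Matrix.cons_val_zero, Matrix.cons_val_one, Matrix.head_cons]
    · exact JC.hX2
    · exact JC.hX1
    · exact JC.hanti⟩

@[simp] lemma JC.φ_cx1 : JC.φ cx1 = JC.X1 := by
  simp [JC.φ, cx1, RingQuot.liftAlgHom_mkAlgHom_apply, FreeAlgebra.lift_ι_apply]

@[simp] lemma JC.φ_cx2 : JC.φ cx2 = JC.X2 := by
  simp [JC.φ, cx2, RingQuot.liftAlgHom_mkAlgHom_apply, FreeAlgebra.lift_ι_apply]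

/-- The linear map taking a matrix to its first column. -/
def JC.col0 : Matrix (Fin 4) (Fin 4) ℂ →ₗ[ℂ] (Fin 4 → ℂ) where
  toFun M := fun i => M i 0
  map_add' _ _ := rfl
  map_smul' _ _ := rfl

lemma JC.li : LinearIndependent ℂ JC.v := by
  apply LinearIndependent.of_comp (JC.col0.comp JC.φ.toLinearMap)
  have : (JC.col0.comp JC.φ.toLinearMap) ∘ JC.v = ⇑(Pi.basisFun ℂ (Fin 4)) := by
    funext k
    fin_cases k <;>
      · funext i
        fin_cases i <;>
          simp [JC.v, show ∀ (M : Matrix (Fin 4) (Fin 4) ℂ) i, JC.col0 M i = M i 0 from fun _ _ => rfl, JC.X1, JC.X2, Matrix.mul_apply, Fin.sum_univ_four,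
            Matrix.one_apply, Matrix.vecHead, Matrix.vecTail, Pi.basisFun_apply,
            Pi.single, Function.update]
  rw [this]
  exact (Pi.basisFun ℂ (Fin 4)).linearIndependent

end JCoplaneAux

/-- The Jordanian co-plane is 4-dimensional, with basis `{1, x₂, x₁, x₂x₁}`. -/
theorem jordanian_coplane_basis :
    LinearIndependent ℂ (![1, cx2, cx1, cx2 * cx1] : Fin 4 → JCoplane) ∧
    Submodule.span ℂ (Set.range (![1, cx2, cx1, cx2 * cx1] : Fin 4 → JCoplane)) = ⊤ ∧
    Module.finrank ℂ JCoplane = 4 := by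
  refine ⟨JC.li, JC.S_top, ?_⟩
  have b : Module.Basis (Fin 4) ℂ JCoplane := Module.Basis.mk JC.li (by rw [show Submodule.span ℂ (Set.range JC.v) = JC.S from rfl, JC.S_top])
  rw [Module.finrank_eq_card_basis b]
  simp
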